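/- Let f be analytic on the open unit disk 𝔻 ⊂ ℂ with |f(z)| ≤ 1 for all z ∈ 𝔻, and write f(z) = Σ_{n=0}^∞ a_n z^n with a = |a₀|. Let p ∈ (0,2]. Then for every z ∈ 𝔻 with |z| = r ≤ R_p := p/(√(4p+1) + p + 1), one has |f(z)|^p + Σ_{n=1}^∞ |a_n| r^n + (1/(1+a) + r/(1−r)) · Σ_{n=1}^∞ |a_n|² r^{2n} ≤ 1. -/

import Mathlib

/-!
By Schwarz–Pick, `|f z| ≤ (a + r) / (1 + a r)`, and by Wiener's inequality `|aₙ| ≤ 1 - a²`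
for `n ≥ 1`: the average of `f` over the rotations of `z` by the `n`-th roots of unity is
`h (zⁿ)` for a function `h` into the closed disc with `h 0 = a₀` and `h' 0 = aₙ`, and
Schwarz–Pick at `0` applies to `h`. Bernoulli's inequality turns the first bound into
`|f z| ^ p ≤ 1 - (p / 2) (1 - ((a + r) / (1 + a r))²)`, the second one bounds both series by
geometric ones, and what is left is an inequality between rational functions of `a` and `r`
which follows from `2 r (1 + r) ≤ p (1 - r)²`, i.e. from `r ≤ R_p`.
-/

open Complex Metric Set ComplexConjugate

noncomputable def mobius (b w : ℂ) : ℂ := (b - w) / (1 - conj b * w)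

lemma one_sub_conj_mul_ne_zero {b w : ℂ} (hb : ‖b‖ < 1) (hw : ‖w‖ ≤ 1) :
    1 - conj b * w ≠ 0 := by
  rw [sub_ne_zero]
  intro h
  have : ‖conj b * w‖ < 1 := by
    rw [norm_mul, RCLike.norm_conj]
    nlinarith [norm_nonneg b, norm_nonneg w]
  simp [← h] at this

lemma sq_norm_one_sub_conj_mul_sub_sq_norm_sub (b w : ℂ) :
    ‖1 - conj b * w‖ ^ 2 - ‖b - w‖ ^ 2 = (1 - ‖b‖ ^ 2) * (1 - ‖w‖ ^ 2) := by
  simp only [Complex.sq_norm, normSq_apply, sub_re, sub_im, mul_re, mul_im, conj_re, conj_im,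
    one_re, one_im]
  ring

lemma mobius_self (b : ℂ) : mobius b b = 0 := by simp [mobius]

lemma mobius_mobius {b w : ℂ} (hb : ‖b‖ < 1) (hw : ‖w‖ ≤ 1) : mobius b (mobius b w) = w := by
  have hbw := one_sub_conj_mul_ne_zero hb hw
  have hbb : 1 - conj b * b ≠ 0 := one_sub_conj_mul_ne_zero hb hb.le
  have hden : 1 - conj b * mobius b w = (1 - conj b * b) / (1 - conj b * w) := by
    simp only [mobius]
    field_simp
    ring
  have hwb : 1 - w * conj b ≠ 0 := by rwa [mul_comm]
  rw [mobius, div_eq_iff (hden ▸ div_ne_zero hbb hbw), hden, mobius]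
  field_simp
  ring

lemma norm_mobius_lt_one {b w : ℂ} (hb : ‖b‖ < 1) (hw : ‖w‖ < 1) : ‖mobius b w‖ < 1 := by
  have hpos := one_sub_conj_mul_ne_zero hb hw.le
  rw [mobius, norm_div, div_lt_one (norm_pos_iff.mpr hpos)]
  have hid := sq_norm_one_sub_conj_mul_sub_sq_norm_sub b w
  have hprod : 0 < (1 - ‖b‖ ^ 2) * (1 - ‖w‖ ^ 2) := by
    apply mul_pos <;> nlinarith [norm_nonneg b, norm_nonneg w]
  exact (pow_lt_pow_iff_left₀ (norm_nonneg _) (norm_nonneg _) two_ne_zero).mp (by linarith)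

lemma norm_mobius_le {b w : ℂ} (hb : ‖b‖ < 1) (hw : ‖w‖ ≤ 1) :
    ‖mobius b w‖ ≤ (‖b‖ + ‖w‖) / (1 + ‖b‖ * ‖w‖) := by
  have hD := one_sub_conj_mul_ne_zero hb hw
  have hbw : 0 ≤ ‖b‖ * ‖w‖ := by positivity
  rw [mobius, norm_div, div_le_div_iff₀ (norm_pos_iff.mpr hD) (by positivity)]
  have hid := sq_norm_one_sub_conj_mul_sub_sq_norm_sub b w
  have htri : ‖1 - conj b * w‖ ≤ 1 + ‖b‖ * ‖w‖ := by
    simpa [norm_mul, RCLike.norm_conj] using norm_sub_le (1 : ℂ) (conj b * w)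
  have h1 : 0 ≤ (1 - ‖b‖ ^ 2) * (1 - ‖w‖ ^ 2) := by
    apply mul_nonneg <;> nlinarith [norm_nonneg b, norm_nonneg w]
  have h2 : ‖1 - conj b * w‖ ^ 2 ≤ (1 + ‖b‖ * ‖w‖) ^ 2 := by gcongr
  refine (pow_le_pow_iff_left₀ (by positivity) (by positivity) two_ne_zero).mp ?_
  rw [mul_pow, mul_pow]
  nlinarith [mul_le_mul_of_nonneg_left h2 h1]

lemma add_div_one_add_mul_le_of_le {a s t : ℝ} (ha0 : 0 ≤ a) (ha1 : a ≤ 1) (ht : 0 ≤ t)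
    (hts : t ≤ s) : (a + t) / (1 + a * t) ≤ (a + s) / (1 + a * s) := by
  rw [div_le_div_iff₀ (by positivity) (by nlinarith)]
  nlinarith [mul_nonneg (sub_nonneg.2 hts) (by nlinarith : 0 ≤ 1 - a ^ 2)]

lemma hasDerivAt_mobius {b w : ℂ} (hw : 1 - conj b * w ≠ 0) :
    HasDerivAt (mobius b) ((conj b * b - 1) / (1 - conj b * w) ^ 2) w := by
  refine (((hasDerivAt_id' w).const_sub b).div
    (((hasDerivAt_id' w).const_mul (conj b)).const_sub 1) hw).congr_deriv ?_
  ring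

lemma norm_deriv_mobius_self {b : ℂ} (hb : ‖b‖ < 1) :
    ‖deriv (mobius b) b‖ = (1 - ‖b‖ ^ 2)⁻¹ := by
  have hbb := one_sub_conj_mul_ne_zero hb hb.le
  rw [(hasDerivAt_mobius hbb).deriv, conj_mul', norm_div, norm_pow, ← neg_sub, norm_neg]
  have : ‖(1 : ℂ) - (‖b‖ : ℂ) ^ 2‖ = 1 - ‖b‖ ^ 2 := by
    rw [← ofReal_pow, ← ofReal_one, ← ofReal_sub, norm_real, Real.norm_of_nonneg]
    nlinarith [norm_nonneg b]
  have hpos : 0 < 1 - ‖b‖ ^ 2 := by nlinarith [norm_nonneg b]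
  rw [this]
  field_simp

section SchwarzPick

variable {u : ℂ → ℂ}

lemma mapsTo_ball_or_eqOn_const (hu : DifferentiableOn ℂ u (ball 0 1))
    (hmaps : MapsTo u (ball 0 1) (closedBall 0 1)) :
    MapsTo u (ball 0 1) (ball 0 1) ∨ (‖u 0‖ = 1 ∧ EqOn u (fun _ => u 0) (ball 0 1)) := by
  refine or_iff_not_imp_left.mpr fun hnot => ?_
  obtain ⟨z₀, hz₀, hz₀'⟩ : ∃ z₀ ∈ ball (0 : ℂ) 1, u z₀ ∉ ball 0 1 := by
    simpa only [MapsTo, not_forall, exists_prop] using hnot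
  have hz₀_norm : ‖u z₀‖ = 1 := le_antisymm (mem_closedBall_zero_iff.mp (hmaps hz₀))
    (not_lt.mp (mt mem_ball_zero_iff.mpr hz₀'))
  have hmax : IsMaxOn (norm ∘ u) (ball 0 1) z₀ := fun z hz =>
    (mem_closedBall_zero_iff.mp (hmaps hz)).trans hz₀_norm.ge
  have heq := Complex.eqOn_of_isPreconnected_of_isMaxOn_norm
    (convex_ball (0 : ℂ) 1).isPreconnected isOpen_ball hu hz₀ hmax
  have hu0 : u 0 = u z₀ := heq (mem_ball_self one_pos)
  exact ⟨by rw [hu0, hz₀_norm], by rw [hu0]; exact heq⟩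

lemma differentiableOn_mobius_comp (hu : DifferentiableOn ℂ u (ball 0 1)) {b : ℂ}
    (hb : ‖b‖ < 1) (hmaps : MapsTo u (ball 0 1) (ball 0 1)) :
    DifferentiableOn ℂ (fun z => mobius b (u z)) (ball 0 1) := fun z hz =>
  (hasDerivAt_mobius (one_sub_conj_mul_ne_zero hb (mem_ball_zero_iff.mp (hmaps hz)).le))
    |>.differentiableAt.comp_differentiableWithinAt z (hu z hz)

lemma schwarzPick_norm_le_of_mapsTo_ball (hu : DifferentiableOn ℂ u (ball 0 1))
    (hmaps : MapsTo u (ball 0 1) (ball 0 1)) {z : ℂ} (hz : ‖z‖ < 1) :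
    ‖u z‖ ≤ (‖u 0‖ + ‖z‖) / (1 + ‖u 0‖ * ‖z‖) := by
  set b := u 0
  have hb : ‖b‖ < 1 := mem_ball_zero_iff.mp (hmaps (mem_ball_self one_pos))
  have hg : ‖mobius b (u z)‖ ≤ ‖z‖ :=
    Complex.norm_le_norm_of_mapsTo_ball (differentiableOn_mobius_comp hu hb hmaps)
      (fun w hw => ball_subset_closedBall (mem_ball_zero_iff.mpr
        (norm_mobius_lt_one hb (mem_ball_zero_iff.mp (hmaps hw)))))
      (mobius_self b) hz
  have huz : ‖u z‖ < 1 := mem_ball_zero_iff.mp (hmaps (mem_ball_zero_iff.mpr hz))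
  calc ‖u z‖ = ‖mobius b (mobius b (u z))‖ := by rw [mobius_mobius hb huz.le]
    _ ≤ (‖b‖ + ‖mobius b (u z)‖) / (1 + ‖b‖ * ‖mobius b (u z)‖) :=
      norm_mobius_le hb (hg.trans hz.le)
    _ ≤ (‖b‖ + ‖z‖) / (1 + ‖b‖ * ‖z‖) :=
      add_div_one_add_mul_le_of_le (norm_nonneg _) hb.le (norm_nonneg _) hg

lemma schwarzPick_norm_deriv_le_of_mapsTo_ball (hu : DifferentiableOn ℂ u (ball 0 1))
    (hmaps : MapsTo u (ball 0 1) (ball 0 1)) :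
    ‖deriv u 0‖ ≤ 1 - ‖u 0‖ ^ 2 := by
  set b := u 0
  have hb : ‖b‖ < 1 := mem_ball_zero_iff.mp (hmaps (mem_ball_self one_pos))
  have hg : HasDerivAt (fun z => mobius b (u z)) (deriv (mobius b) b * deriv u 0) 0 :=
    (hasDerivAt_mobius (one_sub_conj_mul_ne_zero hb hb.le)).differentiableAt.hasDerivAt.comp 0
      (hu.differentiableAt (ball_mem_nhds 0 one_pos)).hasDerivAt
  have hschwarz := Complex.norm_deriv_le_one_of_mapsTo_ball
    (differentiableOn_mobius_comp hu hb hmaps)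
    (fun w hw => ball_subset_closedBall (by
      rw [mobius_self, mem_ball_zero_iff]
      exact norm_mobius_lt_one hb (mem_ball_zero_iff.mp (hmaps hw)))) one_pos
  have hpos : 0 < 1 - ‖b‖ ^ 2 := by nlinarith [norm_nonneg b]
  rw [hg.deriv, norm_mul, norm_deriv_mobius_self hb, inv_mul_le_iff₀ hpos, mul_one] at hschwarz
  exact hschwarz

theorem schwarzPick_norm_le (hu : DifferentiableOn ℂ u (ball 0 1))
    (hmaps : MapsTo u (ball 0 1) (closedBall 0 1)) {z : ℂ} (hz : ‖z‖ < 1) :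
    ‖u z‖ ≤ (‖u 0‖ + ‖z‖) / (1 + ‖u 0‖ * ‖z‖) := by
  rcases mapsTo_ball_or_eqOn_const hu hmaps with hball | ⟨hnorm, hconst⟩
  · exact schwarzPick_norm_le_of_mapsTo_ball hu hball hz
  · rw [hconst (mem_ball_zero_iff.mpr hz), hnorm, one_mul, div_self (by positivity)]

theorem schwarzPick_norm_deriv_le (hu : DifferentiableOn ℂ u (ball 0 1))
    (hmaps : MapsTo u (ball 0 1) (closedBall 0 1)) : ‖deriv u 0‖ ≤ 1 - ‖u 0‖ ^ 2 := by
  rcases mapsTo_ball_or_eqOn_const hu hmaps with hball | ⟨hnorm, hconst⟩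
  · exact schwarzPick_norm_deriv_le_of_mapsTo_ball hu hball
  · rw [(hconst.eventuallyEq_of_mem (ball_mem_nhds 0 one_pos)).deriv_eq, deriv_const, hnorm]
    norm_num

end SchwarzPick

section TaylorCoefficients

variable {f : ℂ → ℂ} {c : ℕ → ℂ}

lemma eball_zero_one_eq_ball : eball (0 : ℂ) 1 = ball 0 1 := by
  rw [← ENNReal.coe_one, eball_coe, NNReal.coe_one]

lemma summable_norm_mul_pow_of_hasSum
    (hsum : ∀ z ∈ ball (0 : ℂ) 1, HasSum (fun n => c n * z ^ n) (f z)) {ρ : ℝ} (hρ0 : 0 ≤ ρ)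
    (hρ1 : ρ < 1) : Summable fun n => ‖c n‖ * ρ ^ n := by
  have hρ : (ρ : ℂ) ∈ ball (0 : ℂ) 1 := by
    rwa [mem_ball_zero_iff, norm_real, Real.norm_of_nonneg hρ0]
  simpa [norm_mul, norm_pow, norm_real, Real.norm_of_nonneg hρ0] using
    summable_norm_iff.mpr (hsum _ hρ).summable

lemma hasFPowerSeriesOnBall_ofScalars
    (hsum : ∀ z ∈ ball (0 : ℂ) 1, HasSum (fun n => c n * z ^ n) (f z)) :
    HasFPowerSeriesOnBall f (FormalMultilinearSeries.ofScalars ℂ c) 0 1 where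
  r_le := ENNReal.le_of_forall_nnreal_lt fun ρ hρ =>
    FormalMultilinearSeries.le_radius_of_summable _ <| by
      simpa only [FormalMultilinearSeries.ofScalars_norm] using
        summable_norm_mul_pow_of_hasSum hsum ρ.coe_nonneg (by exact_mod_cast hρ)
  r_pos := one_pos
  hasSum {y} hy := by
    rw [eball_zero_one_eq_ball] at hy
    simpa [FormalMultilinearSeries.ofScalars_apply_eq, mul_comm] using hsum y hy

lemma apply_zero_eq_of_hasSum
    (hsum : ∀ z ∈ ball (0 : ℂ) 1, HasSum (fun n => c n * z ^ n) (f z)) : f 0 = c 0 :=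
  (hsum 0 (mem_ball_self one_pos)).unique <| by
    simpa using hasSum_single (f := fun n => c n * (0 : ℂ) ^ n) 0 fun n hn => by simp [hn]

open Finset

lemma IsPrimitiveRoot.sum_pow_pow_eq_ite {K : Type*} [Field K] {ω : K} {n : ℕ}
    (hω : IsPrimitiveRoot ω n) (j : ℕ) :
    ∑ k ∈ range n, (ω ^ k) ^ j = if n ∣ j then (n : K) else 0 := by
  simp_rw [← pow_mul, mul_comm _ j, pow_mul]
  split_ifs with hj
  · simp [(hω.pow_eq_one_iff_dvd j).mpr hj]
  · rw [geom_sum_eq ((hω.pow_eq_one_iff_dvd j).not.mpr hj), ← pow_mul, mul_comm, pow_mul,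
      hω.pow_eq_one, one_pow, sub_self, zero_div]

lemma exists_pow_eq_of_mem_ball {w : ℂ} (hw : w ∈ ball (0 : ℂ) 1) {n : ℕ} (hn : 0 < n) :
    ∃ ζ ∈ ball (0 : ℂ) 1, ζ ^ n = w := by
  obtain ⟨ζ, rfl⟩ := IsAlgClosed.exists_pow_nat_eq w hn
  rw [mem_ball_zero_iff, norm_pow] at hw
  exact ⟨ζ, mem_ball_zero_iff.mpr ((pow_lt_one_iff_of_nonneg (norm_nonneg _) hn.ne').mp hw),
    rfl⟩

lemma IsPrimitiveRoot.pow_mul_mem_ball {ω : ℂ} {n : ℕ} (hω : IsPrimitiveRoot ω n) (hn : 0 < n)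
    (k : ℕ) {ζ : ℂ} (hζ : ζ ∈ ball (0 : ℂ) 1) : ω ^ k * ζ ∈ ball (0 : ℂ) 1 := by
  rwa [mem_ball_zero_iff, norm_mul, norm_pow, hω.norm'_eq_one hn.ne', one_pow, one_mul,
    ← mem_ball_zero_iff]

lemma hasSum_coeff_mul_of_isPrimitiveRoot
    (hsum : ∀ z ∈ ball (0 : ℂ) 1, HasSum (fun n => c n * z ^ n) (f z)) {ω : ℂ} {n : ℕ}
    (hω : IsPrimitiveRoot ω n) (hn : 0 < n) {ζ : ℂ} (hζ : ζ ∈ ball (0 : ℂ) 1) :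
    HasSum (fun m => c (n * m) * (ζ ^ n) ^ m) ((n : ℂ)⁻¹ * ∑ k ∈ range n, f (ω ^ k * ζ)) := by
  have havg := (hasSum_sum (s := range n) fun k _ =>
    hsum _ (hω.pow_mul_mem_ball hn k hζ)).mul_left (n : ℂ)⁻¹
  have hterm : ∀ j, (n : ℂ)⁻¹ * ∑ k ∈ range n, c j * (ω ^ k * ζ) ^ j =
      if n ∣ j then c j * ζ ^ j else 0 := fun j => by
    simp_rw [mul_pow, ← mul_assoc, mul_comm (c j), mul_assoc, ← sum_mul,
      hω.sum_pow_pow_eq_ite j]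
    split_ifs
    · field_simp [show (n : ℂ) ≠ 0 by exact_mod_cast hn.ne']
    · simp
  simp_rw [hterm] at havg
  have hinj : Function.Injective (n * ·) := mul_right_injective₀ hn.ne'
  refine (hinj.hasSum_iff fun j hj => ?_).mpr havg |>.congr_fun fun m => ?_
  · rw [if_neg fun ⟨m, hm⟩ => hj ⟨m, hm.symm⟩]
  · simp [pow_mul]

/-- **Wiener's inequality**. -/
theorem norm_coeff_le_one_sub_sq
    (hsum : ∀ z ∈ ball (0 : ℂ) 1, HasSum (fun n => c n * z ^ n) (f z))
    (hmaps : MapsTo f (ball 0 1) (closedBall 0 1)) {n : ℕ} (hn : 0 < n) :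
    ‖c n‖ ≤ 1 - ‖c 0‖ ^ 2 := by
  have hω := Complex.isPrimitiveRoot_exp n hn.ne'
  set ω := exp (2 * Real.pi * I / n)
  have hroot : ∀ w ∈ ball (0 : ℂ) 1, ∃ ζ ∈ ball (0 : ℂ) 1,
      HasSum (fun m => c (n * m) * w ^ m) ((n : ℂ)⁻¹ * ∑ k ∈ range n, f (ω ^ k * ζ)) := by
    intro w hw
    obtain ⟨ζ, hζ, rfl⟩ := exists_pow_eq_of_mem_ball hw hn
    exact ⟨ζ, hζ, hasSum_coeff_mul_of_isPrimitiveRoot hsum hω hn hζ⟩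
  set h : ℂ → ℂ := fun w => ∑' m, c (n * m) * w ^ m
  have hh : ∀ w ∈ ball (0 : ℂ) 1, HasSum (fun m => c (n * m) * w ^ m) (h w) := fun w hw =>
    let ⟨_, _, hS⟩ := hroot w hw; hS.summable.hasSum
  have hmaps_h : MapsTo h (ball 0 1) (closedBall 0 1) := by
    intro w hw
    obtain ⟨ζ, hζ, hS⟩ := hroot w hw
    rw [(hh w hw).unique hS, mem_closedBall_zero_iff, norm_mul, norm_inv, norm_natCast,
      inv_mul_le_iff₀ (by exact_mod_cast hn)]
    refine (norm_sum_le _ _).trans ?_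
    simpa using sum_le_card_nsmul (range n) _ 1 fun k _ =>
      mem_closedBall_zero_iff.mp (hmaps (hω.pow_mul_mem_ball hn k hζ))
  have hps := hasFPowerSeriesOnBall_ofScalars hh
  have hdiff : DifferentiableOn ℂ h (ball 0 1) := eball_zero_one_eq_ball ▸ hps.differentiableOn
  have := schwarzPick_norm_deriv_le hdiff hmaps_h
  rw [hps.hasFPowerSeriesAt.deriv, FormalMultilinearSeries.ofScalars_apply_eq,
    apply_zero_eq_of_hasSum hh] at this
  simpa using this

end TaylorCoefficients

section RealInequalities

-- `p / (√(4p+1) + p + 1)` is the smaller root of `p (1 - r)² = 2 r (1 + r)`.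
lemma two_mul_mul_one_add_le_mul_one_sub_sq {p r : ℝ} (hp0 : 0 < p) (hr0 : 0 ≤ r)
    (hr : r ≤ p / (Real.sqrt (4 * p + 1) + p + 1)) :
    2 * r * (1 + r) ≤ p * (1 - r) ^ 2 ∧ r < 1 := by
  set s := Real.sqrt (4 * p + 1)
  have hs0 : 0 ≤ s := Real.sqrt_nonneg _
  have hs2 : s ^ 2 = 4 * p + 1 := Real.sq_sqrt (by linarith)
  have hrs : r * (s + p + 1) ≤ p := (le_div_iff₀ (by positivity)).mp hr
  have hr1 : r < 1 := by nlinarith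
  have hrs' : r * s ≤ p - r * p - r := by linarith
  have hsq : r ^ 2 * (4 * p + 1) ≤ (p - r * p - r) ^ 2 := by
    rw [← hs2, ← mul_pow]
    exact pow_le_pow_left₀ (by positivity) hrs' 2
  exact ⟨by nlinarith, hr1⟩

lemma rpow_le_one_sub_mul_one_sub_sq {t p : ℝ} (ht0 : 0 ≤ t) (hp0 : 0 ≤ p)
    (hp2 : p ≤ 2) : t ^ p ≤ 1 - p / 2 * (1 - t ^ 2) := by
  have : t ^ p = (1 + (t ^ 2 - 1)) ^ (p / 2) := by
    rw [add_sub_cancel, ← Real.rpow_natCast, ← Real.rpow_mul ht0]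
    congr 1
    ring
  rw [this]
  linarith [rpow_one_add_le_one_add_mul_self (s := t ^ 2 - 1) (by nlinarith)
    (p := p / 2) (by linarith) (by linarith)]

lemma summable_mul_pow_succ_and_tsum_le {b : ℕ → ℝ} {B r : ℝ} (hb0 : ∀ n, 0 ≤ b n)
    (hbB : ∀ n, b n ≤ B) (hr0 : 0 ≤ r) (hr1 : r < 1) :
    Summable (fun n => b n * r ^ (n + 1)) ∧ ∑' n, b n * r ^ (n + 1) ≤ B * r / (1 - r) := by
  have hgeom : HasSum (fun n => B * r ^ (n + 1)) (B * r / (1 - r)) := by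
    rw [div_eq_mul_inv]
    exact ((hasSum_geometric_of_lt_one hr0 hr1).mul_left (B * r)).congr_fun fun n => by ring
  have hle : ∀ n, b n * r ^ (n + 1) ≤ B * r ^ (n + 1) := fun n => by gcongr; exact hbB n
  have hs : Summable (fun n => b n * r ^ (n + 1)) :=
    hgeom.summable.of_nonneg_of_le (fun n => by have := hb0 n; positivity) hle
  exact ⟨hs, hasSum_le hle hs.hasSum hgeom⟩

lemma one_add_le_sq_one_add_div_one_add_mul {a r : ℝ} (ha0 : 0 ≤ a) (ha1 : a ≤ 1) (hr0 : 0 ≤ r)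
    (hr3 : 3 * r ≤ 1) :
    1 + r * (1 - a) / (1 + r) + r ^ 2 * (1 - a ^ 2) / (1 - r ^ 2) ≤
      ((1 + r) / (1 + a * r)) ^ 2 := by
  have hr2 : 0 < 1 - r ^ 2 := by nlinarith
  have har : 0 < 1 + a * r := by positivity
  have hr1 : 1 - r ≠ 0 := by linarith
  have hlhs : 1 + r * (1 - a) / (1 + r) + r ^ 2 * (1 - a ^ 2) / (1 - r ^ 2) =
      ((1 - r) * (1 + r) + (1 - a) * r * (1 - r) + (1 - a ^ 2) * r ^ 2) / ((1 - r) * (1 + r)) := by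
    field_simp
    ring
  rw [hlhs, div_pow, div_le_div_iff₀ (by nlinarith) (by positivity)]
  have h1a : 0 ≤ 1 - a := sub_nonneg.2 ha1
  have h1a2 : 0 ≤ 1 - a ^ 2 := by nlinarith
  have h1a3 : 0 ≤ 1 - a ^ 3 := by nlinarith [mul_nonneg ha0 ha0]
  nlinarith [mul_nonneg (mul_nonneg (mul_nonneg h1a hr0) (by linarith : 0 ≤ 1 - 3 * r))
      (sq_nonneg (1 + r)),
    mul_nonneg (mul_nonneg (mul_nonneg h1a h1a) hr0) (by positivity : 0 ≤ 2 * r + r ^ 3),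
    mul_nonneg (mul_nonneg (mul_nonneg h1a h1a2) hr0) (by positivity : 0 ≤ 3 * r ^ 2),
    mul_nonneg (mul_nonneg (mul_nonneg h1a h1a3) hr0) (pow_nonneg hr0 3)]

lemma geometric_majorant_le {a r p : ℝ} (ha0 : 0 ≤ a) (ha1 : a ≤ 1)
    (hr0 : 0 ≤ r) (hp2 : p ≤ 2) (hp : 2 * r * (1 + r) ≤ p * (1 - r) ^ 2) :
    (1 - a ^ 2) * r / (1 - r) +
        (1 / (1 + a) + r / (1 - r)) * ((1 - a ^ 2) ^ 2 * r ^ 2 / (1 - r ^ 2)) ≤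
      p / 2 * (1 - ((a + r) / (1 + a * r)) ^ 2) := by
  have hr3 : 3 * r ≤ 1 := by nlinarith
  have hr1 : 0 < 1 - r := by linarith
  have hr2 : 0 < 1 - r ^ 2 := by nlinarith
  have hr2' : 1 + r ≠ 0 := by linarith
  have har : 0 < 1 + a * r := by positivity
  have ha2 : 0 ≤ 1 - a ^ 2 := by nlinarith
  have hp' : r * (1 + r) / (1 - r) ^ 2 ≤ p / 2 := by
    rw [div_le_iff₀ (by positivity)]
    linarith
  calc _ = (1 - a ^ 2) * (r / (1 - r)) *
        (1 + r * (1 - a) / (1 + r) + r ^ 2 * (1 - a ^ 2) / (1 - r ^ 2)) := by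
        field_simp
        ring
    _ ≤ (1 - a ^ 2) * (r / (1 - r)) * ((1 + r) / (1 + a * r)) ^ 2 := by
        gcongr
        exact one_add_le_sq_one_add_div_one_add_mul ha0 ha1 hr0 hr3
    _ = (1 - a ^ 2) * (r * (1 + r) / (1 - r) ^ 2) * ((1 - r ^ 2) / (1 + a * r) ^ 2) := by
        field_simp
        ring
    _ ≤ (1 - a ^ 2) * (p / 2) * ((1 - r ^ 2) / (1 + a * r) ^ 2) := by gcongr
    _ = p / 2 * (1 - ((a + r) / (1 + a * r)) ^ 2) := by
        field_simp
        ring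

end RealInequalities

/-- Lemma 2 of Liu–Ponnusamy: if `f` is analytic on the unit disk with `|f| ≤ 1`,
Taylor expansion `f(z) = Σ aₙ zⁿ`, `a = |a₀|`, and `p ∈ (0,2]`, then for `|z| = r`
with `r ≤ R_p = p/(√(4p+1)+p+1)`,
`|f(z)|^p + Σ_{n≥1} |aₙ| rⁿ + (1/(1+a) + r/(1-r)) Σ_{n≥1} |aₙ|² r^{2n} ≤ 1`. -/
theorem stmt_12 (f : ℂ → ℂ) (c : ℕ → ℂ)
    (hf : DifferentiableOn ℂ f (Metric.ball (0 : ℂ) 1))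
    (hsum : ∀ z ∈ Metric.ball (0 : ℂ) 1, HasSum (fun n : ℕ => c n * z ^ n) (f z))
    (hb : ∀ z ∈ Metric.ball (0 : ℂ) 1, ‖f z‖ ≤ 1)
    (p : ℝ) (hp0 : 0 < p) (hp2 : p ≤ 2)
    (r : ℝ) (hr0 : 0 ≤ r) (hr : r ≤ p / (Real.sqrt (4 * p + 1) + p + 1))
    (z : ℂ) (hz : ‖z‖ = r) :
    Summable (fun n : ℕ => ‖c (n + 1)‖ * r ^ (n + 1)) ∧
    Summable (fun n : ℕ => ‖c (n + 1)‖ ^ 2 * r ^ (2 * (n + 1))) ∧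
    ‖f z‖ ^ p + (∑' n : ℕ, ‖c (n + 1)‖ * r ^ (n + 1)) +
      (1 / (1 + ‖c 0‖) + r / (1 - r)) *
        ∑' n : ℕ, ‖c (n + 1)‖ ^ 2 * r ^ (2 * (n + 1)) ≤ 1 := by
  obtain ⟨hp, hr1⟩ := two_mul_mul_one_add_le_mul_one_sub_sq hp0 hr0 hr
  have hmaps : MapsTo f (ball 0 1) (closedBall 0 1) := fun w hw =>
    mem_closedBall_zero_iff.mpr (hb w hw)
  have hf0 := apply_zero_eq_of_hasSum hsum
  have ha1 : ‖c 0‖ ≤ 1 := hf0 ▸ hb 0 (mem_ball_self one_pos)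
  have hcoeff (n : ℕ) : ‖c (n + 1)‖ ≤ 1 - ‖c 0‖ ^ 2 :=
    norm_coeff_le_one_sub_sq hsum hmaps n.succ_pos
  obtain ⟨hs₁, hS₁⟩ := summable_mul_pow_succ_and_tsum_le (fun _ => norm_nonneg _) hcoeff hr0 hr1
  obtain ⟨hs₂, hS₂⟩ := summable_mul_pow_succ_and_tsum_le (fun n => sq_nonneg ‖c (n + 1)‖)
    (fun n => pow_le_pow_left₀ (norm_nonneg _) (hcoeff n) 2) (sq_nonneg r) (by nlinarith)
  simp_rw [← pow_mul] at hs₂ hS₂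
  refine ⟨hs₁, hs₂, ?_⟩
  have hfz : ‖f z‖ ≤ (‖c 0‖ + r) / (1 + ‖c 0‖ * r) :=
    hf0 ▸ hz ▸ schwarzPick_norm_le hf hmaps (hz ▸ hr1)
  have hpow : ‖f z‖ ^ p ≤ 1 - p / 2 * (1 - ((‖c 0‖ + r) / (1 + ‖c 0‖ * r)) ^ 2) :=
    (Real.rpow_le_rpow (norm_nonneg _) hfz hp0.le).trans
      (rpow_le_one_sub_mul_one_sub_sq (by positivity) hp0.le hp2)
  have hweight : 0 ≤ 1 / (1 + ‖c 0‖) + r / (1 - r) := by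
    have : 0 ≤ r / (1 - r) := div_nonneg hr0 (by linarith)
    positivity
  linarith [mul_le_mul_of_nonneg_left hS₂ hweight,
    geometric_majorant_le (norm_nonneg _) ha1 hr0 hp2 hp]
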